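/- arXiv:1706.01904 — 2 statements merged into one kernel-verified Lean document; each statement's English description precedes it below -/
import Mathlib

section
/- Let S be a closed, densely defined symmetric operator on a complex Hilbert space H and let 𝒱 ⊆ D(S*) be a subspace with 𝒱 ∩ D(S) = {0}. Assume there exists v ∈ 𝒱 with Im⟨v, S*v⟩ < 0 (i.e., the proper extension S_𝒱 = S*↾_{D(S) ∔ 𝒱} is not dissipative). Then for every linear map L : 𝒱 → H and every bounded non-negative selfadjoint operator V on H, the operator S_{𝒱,L} + iV (where S_{𝒱,L} has domain D(S) ∔ 𝒱 and acts as f + v ↦ S*(f+v) + Lv) is not dissipative: there exist f ∈ D(S) and v ∈ 𝒱 with Im⟨f+v, S*(f+v) + Lv + iV(f+v)⟩ < 0. -/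
/-! For `f ∈ D(S)` and `v ∈ D(S*)`, symmetry of `S` makes the cross terms of `⟪f + v, S*(f + v)⟫`
real, so `Im ⟪f + v, S*(f + v)⟫ = Im ⟪v, S* v⟫` whatever `f` is. The perturbation
`f + v ↦ L v + i V (f + v)` contributes at most `‖f + v‖ (‖L v‖ + ‖V‖ ‖f + v‖)`, and since `D(S)` is
dense, `f` can be taken so close to `-v₀` that this is smaller than `-Im ⟪v₀, S* v₀⟫`. -/

noncomputable section

open Complex

variable {H : Type*} [NormedAddCommGroup H] [InnerProductSpace ℂ H] [CompleteSpace H]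

local notation "⟪" x ", " y "⟫" => @inner ℂ _ _ x y

/-- A partially defined operator is *dissipative* if `Im ⟪ψ, A ψ⟫ ≥ 0` for all `ψ` in its
domain. -/
def Dissipative (A : H →ₗ.[ℂ] H) : Prop :=
  ∀ ψ : A.domain, 0 ≤ (⟪(ψ : H), A ψ⟫).im

/-- A partially defined operator is *symmetric* if `⟪f, S g⟫ = ⟪S f, g⟫` on its domain. -/
def IsSymmetricP (S : H →ₗ.[ℂ] H) : Prop :=
  ∀ f g : S.domain, ⟪(f : H), S g⟫ = ⟪S f, (g : H)⟫

/-- A partially defined operator is *non-negative* if `⟪f, V f⟫` is real and `≥ 0` on its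
domain. -/
def NonnegP (V : H →ₗ.[ℂ] H) : Prop :=
  ∀ f : V.domain, (⟪(f : H), V f⟫).im = 0 ∧ 0 ≤ (⟪(f : H), V f⟫).re

namespace LinearPMap

variable {S : H →ₗ.[ℂ] H}

theorem le_adjoint_of_isSymmetricP (hdense : Dense (S.domain : Set H)) (hsymm : IsSymmetricP S) :
    S ≤ S.adjoint :=
  IsFormalAdjoint.le_adjoint hdense fun f g => (hsymm f g).symm

theorem im_inner_adjoint_add_of_mem_domain (hdense : Dense (S.domain : Set H))
    (hsymm : IsSymmetricP S) (f : S.domain) (v : S.adjoint.domain)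
    (hfv : (f : H) + v ∈ S.adjoint.domain) :
    (⟪(f : H) + v, S.adjoint ⟨(f : H) + v, hfv⟩⟫).im = (⟪(v : H), S.adjoint v⟫).im := by
  have hle := le_adjoint_of_isSymmetricP hdense hsymm
  have hsplit : S.adjoint ⟨(f : H) + v, hfv⟩ = S f + S.adjoint v := by
    rw [show (⟨(f : H) + v, hfv⟩ : S.adjoint.domain) = ⟨f, hle.1 f.2⟩ + v from rfl, map_add,
      (hle.2 rfl : S f = S.adjoint ⟨f, hle.1 f.2⟩)]
  have hdiag : (⟪(f : H), S f⟫).im = 0 := by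
    rw [← conj_eq_iff_im, inner_conj_symm, hsymm]
  have hcross : ⟪(f : H), S.adjoint v⟫ = starRingEnd ℂ ⟪(v : H), S f⟫ := by
    rw [← inner_conj_symm, adjoint_isFormalAdjoint hdense v f]
  rw [hsplit, inner_add_left, inner_add_right, inner_add_right, hcross]
  simp only [add_im, conj_im, hdiag]
  ring

end LinearPMap

theorem im_inner_add_I_smul_le {E : Type*} [NormedAddCommGroup E] [InnerProductSpace ℂ E]
    (ψ w : E) (V : E →L[ℂ] E) :
    (⟪ψ, w + I • V ψ⟫).im ≤ ‖ψ‖ * (‖w‖ + ‖V‖ * ‖ψ‖) := by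
  rw [inner_add_right, inner_smul_right, add_im, I_mul_im]
  calc (⟪ψ, w⟫).im + (⟪ψ, V ψ⟫).re ≤ ‖⟪ψ, w⟫‖ + ‖⟪ψ, V ψ⟫‖ :=
        add_le_add (im_le_norm _) (re_le_norm _)
    _ ≤ ‖ψ‖ * ‖w‖ + ‖ψ‖ * ‖V ψ‖ := add_le_add (norm_inner_le_norm _ _) (norm_inner_le_norm _ _)
    _ ≤ ‖ψ‖ * ‖w‖ + ‖ψ‖ * (‖V‖ * ‖ψ‖) := by gcongr; exact V.le_opNorm ψ
    _ = ‖ψ‖ * (‖w‖ + ‖V‖ * ‖ψ‖) := by ring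

theorem Dense.exists_norm_add_mul_lt {E : Type*} [SeminormedAddCommGroup E] {D : Set E}
    (hD : Dense D) (x : E) (a b : ℝ) {c : ℝ} (hc : 0 < c) :
    ∃ f ∈ D, ‖f + x‖ * (a + b * ‖f + x‖) < c := by
  have hU : IsOpen {f : E | ‖f + x‖ * (a + b * ‖f + x‖) < c} :=
    isOpen_lt (by fun_prop) continuous_const
  have hx : -x ∈ {f : E | ‖f + x‖ * (a + b * ‖f + x‖) < c} := by simpa using hc
  exact hD.exists_mem_open hU ⟨-x, hx⟩

theorem statement18_general
    (S : H →ₗ.[ℂ] H)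
    (hSdense : Dense (S.domain : Set H)) (hSsymm : IsSymmetricP S)
    (𝓥 : Submodule ℂ H)
    (v₀ : 𝓥) (hv₀ : (v₀ : H) ∈ S.adjoint.domain)
    (hneg : (⟪(v₀ : H), S.adjoint ⟨(v₀ : H), hv₀⟩⟫).im < 0) :
    ∀ (L : 𝓥 →ₗ[ℂ] H) (V : H →L[ℂ] H), IsSelfAdjoint V →
      (∀ f : H, 0 ≤ (⟪f, V f⟫).re) →
      ∃ (f : S.domain) (v : 𝓥) (hfv : (f : H) + (v : H) ∈ S.adjoint.domain),
        (⟪(f : H) + (v : H),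
          S.adjoint ⟨(f : H) + (v : H), hfv⟩ + L v + Complex.I • V ((f : H) + (v : H))⟫).im
          < 0 := by
  intro L V _ _
  obtain ⟨f, hf, hsmall⟩ :=
    hSdense.exists_norm_add_mul_lt (v₀ : H) ‖L v₀‖ ‖V‖ (neg_pos.2 hneg)
  have hfv := add_mem ((LinearPMap.le_adjoint_of_isSymmetricP hSdense hSsymm).1 hf) hv₀
  refine ⟨⟨f, hf⟩, v₀, hfv, ?_⟩
  have hboundary := LinearPMap.im_inner_adjoint_add_of_mem_domain hSdense hSsymm ⟨f, hf⟩
    ⟨(v₀ : H), hv₀⟩ hfv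
  have hperturbation := im_inner_add_I_smul_le (f + v₀) (L v₀) V
  rw [add_assoc, inner_add_right, add_im, hboundary]
  linarith

/-- If the proper extension `S_𝓥` fails to be dissipative at some
`v₀ ∈ 𝓥`, then no `S_{𝓥,L} + iV` with `V` bounded non-negative selfadjoint is
dissipative. -/
theorem statement18
    (S : H →ₗ.[ℂ] H)
    (hSdense : Dense (S.domain : Set H)) (hSclosed : S.IsClosed) (hSsymm : IsSymmetricP S)
    (𝓥 : Submodule ℂ H) (h𝓥 : 𝓥 ≤ S.adjoint.domain) (h𝓥S : 𝓥 ⊓ S.domain = ⊥)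
    (v₀ : 𝓥) (hv₀ : (v₀ : H) ∈ S.adjoint.domain)
    (hneg : (⟪(v₀ : H), S.adjoint ⟨(v₀ : H), hv₀⟩⟫).im < 0) :
    ∀ (L : 𝓥 →ₗ[ℂ] H) (V : H →L[ℂ] H), IsSelfAdjoint V →
      (∀ f : H, 0 ≤ (⟪f, V f⟫).re) →
      ∃ (f : S.domain) (v : 𝓥) (hfv : (f : H) + (v : H) ∈ S.adjoint.domain),
        (⟪(f : H) + (v : H),
          S.adjoint ⟨(f : H) + (v : H), hfv⟩ + L v + Complex.I • V ((f : H) + (v : H))⟫).im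
          < 0 :=
  statement18_general S hSdense hSsymm 𝓥 v₀ hv₀ hneg
end
end

section
/- Let S be a closed, densely defined symmetric operator on a complex Hilbert space H and let 𝒱 ⊆ D(S*) be a subspace with 𝒱 ∩ D(S) = {0}. Assume there exists ε > 0 such that Im⟨v, S*v⟩ ≥ ε‖v‖² for all v ∈ 𝒱, and let L : 𝒱 → H be a bounded linear map with ‖Lv‖ ≤ M‖v‖ for all v ∈ 𝒱. Then the operator S_{𝒱,L} (domain D(S) ∔ 𝒱, acting as f + v ↦ S*(f+v) + Lv) satisfies Im⟨ψ, S_{𝒱,L}ψ⟩ ≥ −(M²/(4ε))‖ψ‖² for all ψ ∈ D(S) ∔ 𝒱. In particular, for every bounded non-negative selfadjoint operator V on H with V ≥ M²/(4ε) (i.e., ⟨h, Vh⟩ ≥ (M²/(4ε))‖h‖² for all h ∈ H), the operator S_{𝒱,L} + iV is dissipative: Im⟨ψ, S_{𝒱,L}ψ + iVψ⟩ ≥ 0 for all ψ ∈ D(S) ∔ 𝒱. -/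
/-!
Write `ψ = f + v` with `f ∈ D(S)` and `v ∈ 𝒱`. Symmetry of `S` makes `⟪f, S f⟫` real and the
cross terms `⟪f, S* v⟫ + ⟪v, S f⟫` a real number, so `Im ⟪ψ, S* ψ⟫ = Im ⟪v, S* v⟫ ≥ ε ‖v‖²`.
The perturbation costs at most `‖ψ‖ M ‖v‖`, and `ε ‖v‖² - M ‖v‖ ‖ψ‖ ≥ -(M² / 4ε) ‖ψ‖²`
by completing the square.
-/

noncomputable section

open Complex

variable {H : Type*} [NormedAddCommGroup H] [InnerProductSpace ℂ H] [CompleteSpace H]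

local notation "⟪" x ", " y "⟫" => @inner ℂ _ _ x y

open ComplexConjugate

lemma mul_mul_le_mul_sq_add_div_mul_sq {ε : ℝ} (hε : 0 < ε) (M a b : ℝ) :
    M * a * b ≤ ε * a ^ 2 + M ^ 2 / (4 * ε) * b ^ 2 := by
  have hsq : 0 ≤ ε * (a - M * b / (2 * ε)) ^ 2 := by positivity
  have hexpand : ε * (a - M * b / (2 * ε)) ^ 2
      = ε * a ^ 2 + M ^ 2 / (4 * ε) * b ^ 2 - M * a * b := by
    field_simp
    ring
  linarith

section

variable {E : Type*} [NormedAddCommGroup E] [InnerProductSpace ℂ E]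

lemma neg_norm_mul_norm_le_im_inner (x y : E) : -(‖x‖ * ‖y‖) ≤ (⟪x, y⟫).im :=
  neg_le_of_abs_le ((Complex.abs_im_le_norm _).trans (norm_inner_le_norm x y))

lemma im_inner_I_smul_right (x y : E) : (⟪x, Complex.I • y⟫).im = (⟪x, y⟫).re := by
  simp [Complex.mul_im]

namespace IsSymmetricP

variable {S : E →ₗ.[ℂ] E}

lemma isFormalAdjoint (hS : IsSymmetricP S) : S.IsFormalAdjoint S :=
  fun f g => (hS f g).symm

lemma im_inner_apply_self (hS : IsSymmetricP S) (f : S.domain) : (⟪(f : E), S f⟫).im = 0 := by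
  have hreal : conj ⟪(f : E), S f⟫ = ⟪(f : E), S f⟫ := by rw [inner_conj_symm, hS f f]
  exact Complex.conj_eq_iff_im.mp hreal

lemma im_inner_adjoint_add [CompleteSpace E] (hdense : Dense (S.domain : Set E))
    (hS : IsSymmetricP S) (f : S.domain) (v : S.adjoint.domain)
    (hfv : (f : E) + v ∈ S.adjoint.domain) :
    (⟪(f : E) + v, S.adjoint ⟨(f : E) + v, hfv⟩⟫).im = (⟪(v : E), S.adjoint v⟫).im := by
  have hle := hS.isFormalAdjoint.le_adjoint hdense
  have hsplit : S.adjoint ⟨(f : E) + v, hfv⟩ = S f + S.adjoint v := by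
    rw [hle.2 (x := f) (y := ⟨f, hle.1 f.2⟩) rfl, ← LinearPMap.map_add]
    rfl
  have hcross : ⟪(v : E), S f⟫ = conj ⟪(f : E), S.adjoint v⟫ := by
    rw [← LinearPMap.adjoint_isFormalAdjoint hdense v f, inner_conj_symm]
  simp only [hsplit, inner_add_left, inner_add_right, Complex.add_im, hS.im_inner_apply_self,
    hcross, Complex.conj_im]
  ring

end IsSymmetricP

end

theorem statement19_general
    (S : H →ₗ.[ℂ] H)
    (hSdense : Dense (S.domain : Set H)) (hSsymm : IsSymmetricP S)
    (𝓥 : Submodule ℂ H) (h𝓥 : 𝓥 ≤ S.adjoint.domain)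
    (L : 𝓥 →ₗ[ℂ] H)
    (ε : ℝ) (hε : 0 < ε)
    (hlower : ∀ (v : 𝓥) (hv : (v : H) ∈ S.adjoint.domain),
      ε * ‖(v : H)‖ ^ 2 ≤ (⟪(v : H), S.adjoint ⟨(v : H), hv⟩⟫).im)
    (M : ℝ) (hM : ∀ v : 𝓥, ‖L v‖ ≤ M * ‖(v : H)‖) :
    (∀ (f : S.domain) (v : 𝓥) (hfv : (f : H) + (v : H) ∈ S.adjoint.domain),
      -(M ^ 2 / (4 * ε)) * ‖(f : H) + (v : H)‖ ^ 2
        ≤ (⟪(f : H) + (v : H), S.adjoint ⟨(f : H) + (v : H), hfv⟩ + L v⟫).im) ∧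
    ∀ V : H →L[ℂ] H, IsSelfAdjoint V →
      (∀ h : H, M ^ 2 / (4 * ε) * ‖h‖ ^ 2 ≤ (⟪h, V h⟫).re) →
      ∀ (f : S.domain) (v : 𝓥) (hfv : (f : H) + (v : H) ∈ S.adjoint.domain),
        0 ≤ (⟪(f : H) + (v : H),
          S.adjoint ⟨(f : H) + (v : H), hfv⟩ + L v + Complex.I • V ((f : H) + (v : H))⟫).im := by
  have hbound : ∀ (f : S.domain) (v : 𝓥) (hfv : (f : H) + (v : H) ∈ S.adjoint.domain),
      -(M ^ 2 / (4 * ε)) * ‖(f : H) + (v : H)‖ ^ 2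
        ≤ (⟪(f : H) + (v : H), S.adjoint ⟨(f : H) + (v : H), hfv⟩ + L v⟫).im := by
    intro f v hfv
    have hform := hSsymm.im_inner_adjoint_add hSdense f ⟨v, h𝓥 v.2⟩ hfv
    have hcoercive := hlower v (h𝓥 v.2)
    have hperturb := neg_norm_mul_norm_le_im_inner ((f : H) + v) (L v)
    have hL := mul_le_mul_of_nonneg_left (hM v) (norm_nonneg ((f : H) + v))
    have hsquare := mul_mul_le_mul_sq_add_div_mul_sq hε M ‖(v : H)‖ ‖(f : H) + v‖
    rw [inner_add_right, Complex.add_im, hform]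
    linarith
  refine ⟨hbound, fun V _ hV f v hfv => ?_⟩
  rw [inner_add_right, Complex.add_im, im_inner_I_smul_right]
  linarith [hbound f v hfv, hV ((f : H) + v)]

/-- If `Im ⟪v, S* v⟫ ≥ ε ‖v‖²` on `𝓥` and `‖L v‖ ≤ M ‖v‖`, then the
imaginary part of `S_{𝓥,L}` is bounded below by `-(M²/(4ε))`, and `S_{𝓥,L} + iV` is
dissipative for every bounded non-negative selfadjoint `V ≥ M²/(4ε)`. -/
theorem statement19
    (S : H →ₗ.[ℂ] H)
    (hSdense : Dense (S.domain : Set H)) (hSclosed : S.IsClosed) (hSsymm : IsSymmetricP S)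
    (𝓥 : Submodule ℂ H) (h𝓥 : 𝓥 ≤ S.adjoint.domain) (h𝓥S : 𝓥 ⊓ S.domain = ⊥)
    (L : 𝓥 →ₗ[ℂ] H)
    (ε : ℝ) (hε : 0 < ε)
    (hlower : ∀ (v : 𝓥) (hv : (v : H) ∈ S.adjoint.domain),
      ε * ‖(v : H)‖ ^ 2 ≤ (⟪(v : H), S.adjoint ⟨(v : H), hv⟩⟫).im)
    (M : ℝ) (hM : ∀ v : 𝓥, ‖L v‖ ≤ M * ‖(v : H)‖) :
    (∀ (f : S.domain) (v : 𝓥) (hfv : (f : H) + (v : H) ∈ S.adjoint.domain),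
      -(M ^ 2 / (4 * ε)) * ‖(f : H) + (v : H)‖ ^ 2
        ≤ (⟪(f : H) + (v : H), S.adjoint ⟨(f : H) + (v : H), hfv⟩ + L v⟫).im) ∧
    ∀ V : H →L[ℂ] H, IsSelfAdjoint V →
      (∀ h : H, M ^ 2 / (4 * ε) * ‖h‖ ^ 2 ≤ (⟪h, V h⟫).re) →
      ∀ (f : S.domain) (v : 𝓥) (hfv : (f : H) + (v : H) ∈ S.adjoint.domain),
        0 ≤ (⟪(f : H) + (v : H),
          S.adjoint ⟨(f : H) + (v : H), hfv⟩ + L v + Complex.I • V ((f : H) + (v : H))⟫).im :=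
  statement19_general S hSdense hSsymm 𝓥 h𝓥 L ε hε hlower M hM
end
end
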